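/- Let n ≥ 4. There is no complex constant c such that for every n×n complex matrix X with Tr(X) = 0, the trace of (ad X)⁴, viewed as a linear endomorphism of the space of n×n complex matrices, equals c·(Tr(X²))². -/

import Mathlib

open Matrix

noncomputable section

/-- The adjoint action `ad X : Y ↦ X·Y − Y·X` as a linear endomorphism of the matrix space. -/
def adM {m : Type*} [Fintype m] [DecidableEq m] (X : Matrix m m ℂ) :
    Module.End ℂ (Matrix m m ℂ) :=
  LinearMap.mulLeft ℂ X - LinearMap.mulRight ℂ X

theorem adM_apply {m : Type*} [Fintype m] [DecidableEq m] (X Y : Matrix m m ℂ) :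
    adM X Y = X * Y - Y * X := rfl

/-! ### Auxiliary lemmas -/

lemma repr_std_aux {n : ℕ} (M : Matrix (Fin n) (Fin n) ℂ) (p : Fin n × Fin n) :
    (Matrix.stdBasis ℂ (Fin n) (Fin n)).repr M p = M p.1 p.2 := by
  simp [Matrix.stdBasis, Pi.basis_repr]

/-- The trace of an endomorphism of the matrix space as a sum over entries. -/
lemma trace_eq_sum_aux {n : ℕ} (f : Module.End ℂ (Matrix (Fin n) (Fin n) ℂ)) :
    LinearMap.trace ℂ _ f
      = ∑ p : Fin n × Fin n, (f (single p.1 p.2 1)) p.1 p.2 := by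
  rw [LinearMap.trace_eq_matrix_trace ℂ (Matrix.stdBasis ℂ (Fin n) (Fin n))]
  rw [Matrix.trace]
  refine Finset.sum_congr rfl fun p _ => ?_
  rw [Matrix.diag]
  rw [LinearMap.toMatrix_apply, Matrix.stdBasis_eq_single, repr_std_aux]

lemma adM_diag_aux {n : ℕ} (d : Fin n → ℂ) (M : Matrix (Fin n) (Fin n) ℂ) (i j : Fin n) :
    adM (diagonal d) M i j = (d i - d j) * M i j := by
  show ((diagonal d) * M - M * (diagonal d)) i j = _
  simp [diagonal_mul, mul_diagonal]
  ring

lemma adM_pow4_aux {n : ℕ} (d : Fin n → ℂ) (M : Matrix (Fin n) (Fin n) ℂ) (i j : Fin n) :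
    (adM (diagonal d) ^ 4) M i j = (d i - d j) ^ 4 * M i j := by
  show adM (diagonal d) ((adM (diagonal d)) ((adM (diagonal d)) ((adM (diagonal d))
      (((1 : Module.End ℂ _)) M)))) i j = _
  rw [Module.End.one_apply, adM_diag_aux, adM_diag_aux, adM_diag_aux, adM_diag_aux]
  ring

lemma sum_ite4_aux {n : ℕ} (hn : 4 ≤ n) (c0 c1 c2 c3 : ℂ) :
    ∑ i : Fin n, (if (i : ℕ) = 0 then c0 else if (i : ℕ) = 1 then c1 else
        if (i : ℕ) = 2 then c2 else if (i : ℕ) = 3 then c3 else 0)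
      = c0 + c1 + c2 + c3 := by
  have key : ∀ i : Fin n, (if (i : ℕ) = 0 then c0 else if (i : ℕ) = 1 then c1 else
        if (i : ℕ) = 2 then c2 else if (i : ℕ) = 3 then c3 else 0)
      = (if i = ⟨0, by omega⟩ then c0 else 0) + (if i = ⟨1, by omega⟩ then c1 else 0)
        + (if i = ⟨2, by omega⟩ then c2 else 0) + (if i = ⟨3, by omega⟩ then c3 else 0) := by
    intro i
    simp only [Fin.ext_iff]
    split_ifs <;> simp_all
  rw [Finset.sum_congr rfl fun i _ => key i]
  rw [Finset.sum_add_distrib, Finset.sum_add_distrib, Finset.sum_add_distrib]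
  simp [Finset.sum_ite_eq']

/-- For `n ≥ 4`, there is no constant `c` such that for every traceless `n×n` complex matrix
`X`, the trace of `(ad X)⁴` on the space of `n×n` matrices equals `c·(Tr(X²))²`. -/
theorem sln_trace_ad_four_not_proportional (n : ℕ) (hn : 4 ≤ n) :
    ¬ ∃ c : ℂ, ∀ X : Matrix (Fin n) (Fin n) ℂ, X.trace = 0 →
        LinearMap.trace ℂ (Matrix (Fin n) (Fin n) ℂ) (adM X ^ 4)
          = c * ((X ^ 2).trace) ^ 2 := by
  rintro ⟨c, hc⟩
  -- the diagonal matrix with entries 1, i, -1, -i, 0, ..., 0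
  set d : Fin n → ℂ := fun i => if (i : ℕ) = 0 then 1 else if (i : ℕ) = 1 then Complex.I else
      if (i : ℕ) = 2 then -1 else if (i : ℕ) = 3 then -Complex.I else 0 with hd
  -- power sums of the diagonal entries
  have hpow : ∀ (k : ℕ), k ≠ 0 → ∑ i : Fin n, (d i) ^ k
      = 1 ^ k + Complex.I ^ k + (-1 : ℂ) ^ k + (-Complex.I) ^ k := by
    intro k hk
    have key : ∀ i : Fin n, (d i) ^ k
        = (if (i : ℕ) = 0 then (1 : ℂ) ^ k else if (i : ℕ) = 1 then Complex.I ^ k else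
          if (i : ℕ) = 2 then (-1 : ℂ) ^ k else if (i : ℕ) = 3 then (-Complex.I) ^ k else 0) := by
      intro i
      simp only [hd]
      split_ifs <;> simp [zero_pow hk]
    rw [Finset.sum_congr rfl fun i _ => key i, sum_ite4_aux hn]
  have hI2 : Complex.I ^ 2 = -1 := Complex.I_sq
  have hS1 : ∑ i : Fin n, d i = 0 := by
    have := hpow 1 one_ne_zero
    simp only [pow_one] at this
    rw [show (∑ i : Fin n, d i) = ∑ i : Fin n, (d i) ^ 1 by simp, hpow 1 one_ne_zero]
    ring
  have hS2 : ∑ i : Fin n, (d i) ^ 2 = 0 := by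
    rw [hpow 2 two_ne_zero]; norm_num [Complex.I_sq]
  have hS3 : ∑ i : Fin n, (d i) ^ 3 = 0 := by
    rw [hpow 3 three_ne_zero]; norm_num [pow_succ, Complex.I_mul_I]
  have hS4 : ∑ i : Fin n, (d i) ^ 4 = 4 := by
    rw [hpow 4 four_ne_zero]; norm_num [pow_succ, Complex.I_mul_I]
  set X : Matrix (Fin n) (Fin n) ℂ := diagonal d with hX
  have htr : X.trace = 0 := by
    rw [hX, trace_diagonal, hS1]
  have htr2 : (X ^ 2).trace = 0 := by
    have : X ^ 2 = diagonal (fun i => (d i) ^ 2) := by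
      rw [hX, sq, diagonal_mul_diagonal]
      congr 1
      funext i
      ring
    rw [this, trace_diagonal, hS2]
  have key := hc X htr
  rw [htr2] at key
  -- compute the trace of (ad X)^4
  have htrace : LinearMap.trace ℂ (Matrix (Fin n) (Fin n) ℂ) (adM X ^ 4) = 8 * n := by
    rw [trace_eq_sum_aux]
    have : ∀ p : Fin n × Fin n, ((adM X ^ 4) (single p.1 p.2 1)) p.1 p.2
        = (d p.1 - d p.2) ^ 4 := by
      intro p
      rw [hX, adM_pow4_aux]
      simp
    rw [Finset.sum_congr rfl fun p _ => this p, Fintype.sum_prod_type]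
    have hin : ∀ i : Fin n, ∑ j : Fin n, (d i - d j) ^ 4 = n * (d i) ^ 4 + 4 := by
      intro i
      have expand : ∀ j : Fin n, (d i - d j) ^ 4
          = (d i) ^ 4 - (4 * (d i) ^ 3) * d j + (6 * (d i) ^ 2) * (d j) ^ 2
            - (4 * (d i)) * (d j) ^ 3 + (d j) ^ 4 := fun j => by ring
      rw [Finset.sum_congr rfl fun j _ => expand j]
      rw [Finset.sum_add_distrib, Finset.sum_sub_distrib, Finset.sum_add_distrib,
        Finset.sum_sub_distrib, ← Finset.mul_sum, ← Finset.mul_sum, ← Finset.mul_sum,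
        hS1, hS2, hS3, hS4, Finset.sum_const, Finset.card_univ, Fintype.card_fin,
        nsmul_eq_mul]
      ring
    rw [Finset.sum_congr rfl fun i _ => hin i, Finset.sum_add_distrib, ← Finset.mul_sum,
      hS4, Finset.sum_const, Finset.card_univ, Fintype.card_fin, nsmul_eq_mul]
    ring
  rw [htrace] at key
  have h8 : (8 : ℂ) * n = 0 := by rw [key]; ring
  have hn0 : (n : ℂ) = 0 := by
    rcases mul_eq_zero.mp h8 with h | h
    · norm_num at h
    · exact h
  rw [Nat.cast_eq_zero] at hn0
  omega

end
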